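/- arXiv:1109.1657 — 5 statements merged into one kernel-verified Lean document; each statement's English description precedes it below -/
import Mathlib

section
/- Let G be the graph built from an instance (U, 𝒞) of 3-SAT with variables u_1,…,u_n and clauses C_1,…,C_m as follows: for each i, take a triangle on vertices {u_i, ū_i, v_i}; for each clause C_j = {x_j, y_j, z_j} (three literals), take a vertex c_j adjacent to x_j, y_j, z_j; add a path s_1 s_2 s_3 and join s_1 and s_3 to every c_j. Then γ(G) ≥ n + 1. -/
/-- A literal over `n` variables: a variable index together with a polarity
(`true` = the positive literal `uᵢ`, `false` = the negated literal `ūᵢ`). -/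
abbrev Lit (n : ℕ) := Fin n × Bool

/-- Vertex type of the bondage construction: literal vertices `uᵢ, ūᵢ`,
triangle apexes `vᵢ`, clause vertices `cⱼ`, and path vertices `s₁ s₂ s₃`. -/
abbrev BVert (n m : ℕ) := Lit n ⊕ (Fin n ⊕ (Fin m ⊕ Fin 3))

/-- The literal vertex `uᵢ` (if `b = true`) or `ūᵢ` (if `b = false`). -/
def litv {n m : ℕ} (i : Fin n) (b : Bool) : BVert n m := Sum.inl (i, b)

/-- The triangle apex vertex `vᵢ`. -/
def vv {n m : ℕ} (i : Fin n) : BVert n m := Sum.inr (Sum.inl i)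

/-- The clause vertex `cⱼ`. -/
def cv {n m : ℕ} (j : Fin m) : BVert n m := Sum.inr (Sum.inr (Sum.inl j))

/-- The path vertex `s₍ₖ₊₁₎` for `k : Fin 3` (so `sv 0 = s₁`, `sv 1 = s₂`, `sv 2 = s₃`). -/
def sv {n m : ℕ} (k : Fin 3) : BVert n m := Sum.inr (Sum.inr (Sum.inr k))

/-- Base adjacency relation of the bondage construction (symmetrized by `fromRel`):
triangle edges on `{uᵢ, ūᵢ, vᵢ}`, clause edges `cⱼxⱼ, cⱼyⱼ, cⱼzⱼ`, the path
`s₁s₂s₃`, and the edges joining `s₁` and `s₃` to every `cⱼ`. -/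
def bondRel {n m : ℕ} (C : Fin m → Fin 3 → Lit n) : BVert n m → BVert n m → Prop
  | Sum.inl (i, b), Sum.inl (i', b') => i = i' ∧ b ≠ b'
  | Sum.inl (i, _), Sum.inr (Sum.inl i') => i = i'
  | Sum.inl l, Sum.inr (Sum.inr (Sum.inl j)) => ∃ k, C j k = l
  | Sum.inr (Sum.inr (Sum.inr p)), Sum.inr (Sum.inr (Sum.inr q)) =>
      (p = 0 ∧ q = 1) ∨ (p = 1 ∧ q = 2)
  | Sum.inr (Sum.inr (Sum.inr p)), Sum.inr (Sum.inr (Sum.inl _)) => p = 0 ∨ p = 2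
  | _, _ => False

/-- The graph of the bondage construction associated with a 3-SAT instance `C`. -/
def bondGraph {n m : ℕ} (C : Fin m → Fin 3 → Lit n) : SimpleGraph (BVert n m) :=
  SimpleGraph.fromRel (bondRel C)

/-- `D` is a dominating set of `G`: every vertex not in `D` has a neighbor in `D`. -/
def IsDomSet {V : Type*} (G : SimpleGraph V) (D : Finset V) : Prop :=
  ∀ v, v ∉ D → ∃ u ∈ D, G.Adj u v

/-- The domination number of `G`: the minimum cardinality of a dominating set. -/
noncomputable def domNum {V : Type*} (G : SimpleGraph V) : ℕ :=
  sInf {k | ∃ D : Finset V, IsDomSet G D ∧ D.card = k}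


/-- Block classification used to lower-bound a dominating set's cardinality. -/
def blk {n m : ℕ} : BVert n m → Option (Fin n ⊕ Unit)
  | Sum.inl (i, _) => some (Sum.inl i)
  | Sum.inr (Sum.inl i) => some (Sum.inl i)
  | Sum.inr (Sum.inr (Sum.inl _)) => none
  | Sum.inr (Sum.inr (Sum.inr _)) => some (Sum.inr ())

/-- In the bondage construction, `γ(G) ≥ n + 1`. -/
theorem bondGraph_domNum_ge {n m : ℕ} (C : Fin m → Fin 3 → Lit n) :
    n + 1 ≤ domNum (bondGraph C) := by
  have hne : {k | ∃ D : Finset (BVert n m), IsDomSet (bondGraph C) D ∧ D.card = k}.Nonempty :=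
    ⟨(Finset.univ : Finset (BVert n m)).card, Finset.univ,
      fun v hv => absurd (Finset.mem_univ v) hv, rfl⟩
  obtain ⟨D, hD, hcard⟩ := Nat.sInf_mem hne
  rw [domNum, ← hcard]
  -- every block contains an element of D
  have hblk : ∀ t : Fin n ⊕ Unit, some t ∈ D.image blk := by
    rintro (i | u)
    · by_cases h : vv (m := m) i ∈ D
      · exact Finset.mem_image.2 ⟨_, h, rfl⟩
      · obtain ⟨u, hu, hadj⟩ := hD _ h
        refine Finset.mem_image.2 ⟨u, hu, ?_⟩
        obtain ⟨hne', hrel⟩ := hadj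
        rcases u with ⟨i', b'⟩ | i' | j' | k'
        · rcases hrel with h | h <;>
            simp_all [bondRel, vv, blk]
        · rcases hrel with h | h <;> simp_all [bondRel, vv, blk]
        · rcases hrel with h | h <;> simp_all [bondRel, vv, blk]
        · rcases hrel with h | h <;> simp_all [bondRel, vv, blk]
    · by_cases h : sv (n := n) (m := m) 1 ∈ D
      · exact Finset.mem_image.2 ⟨_, h, rfl⟩
      · obtain ⟨u, hu, hadj⟩ := hD _ h
        refine Finset.mem_image.2 ⟨u, hu, ?_⟩
        obtain ⟨hne', hrel⟩ := hadj
        rcases u with ⟨i', b'⟩ | i' | j' | k'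
        · rcases hrel with h | h <;> simp_all [bondRel, sv, blk]
        · rcases hrel with h | h <;> simp_all [bondRel, sv, blk]
        · rcases hrel with h | h <;> simp_all [bondRel, sv, blk]
        · rcases hrel with h | h <;> simp_all [bondRel, sv, blk]
  have hsub : (Finset.univ : Finset (Fin n ⊕ Unit)).image some ⊆ D.image blk := by
    intro x hx
    obtain ⟨t, -, rfl⟩ := Finset.mem_image.1 hx
    exact hblk t
  have h1 : ((Finset.univ : Finset (Fin n ⊕ Unit)).image some).card = n + 1 := by
    rw [Finset.card_image_of_injective _ (Option.some_injective _)]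
    simp
  calc n + 1 = ((Finset.univ : Finset (Fin n ⊕ Unit)).image some).card := h1.symm
    _ ≤ (D.image blk).card := Finset.card_le_card hsub
    _ ≤ D.card := Finset.card_image_le
end

section
/- Let G be the 3-SAT bondage construction (triangles {u_i, ū_i, v_i} for each variable u_i, a vertex c_j adjacent to the three literals of each clause C_j, and a path s_1 s_2 s_3 with s_1 and s_3 joined to every c_j). Then γ(G) = n + 1 if and only if the 3-SAT instance 𝒞 is satisfiable. -/
/-- The 3-SAT instance `C` is satisfiable: some truth assignment makes at least
one literal in every clause true. -/
def Satisfiable {n m : ℕ} (C : Fin m → Fin 3 → Lit n) : Prop :=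
  ∃ t : Fin n → Bool, ∀ j : Fin m, ∃ k : Fin 3, t (C j k).1 = (C j k).2

section
variable {n m : ℕ} {C : Fin m → Fin 3 → Lit n}

lemma adj_iff (a b : BVert n m) :
    (bondGraph C).Adj a b ↔ a ≠ b ∧ (bondRel C a b ∨ bondRel C b a) :=
  SimpleGraph.fromRel_adj _ a b

lemma neighbor_vv {u : BVert n m} {i : Fin n}
    (h : (bondGraph C).Adj u (vv i)) : ∃ b, u = litv i b := by
  rw [adj_iff] at h
  obtain ⟨-, h⟩ := h
  rcases u with ⟨i', b'⟩ | i' | j' | p' <;>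
    simp [bondRel, litv, vv] at h ⊢ <;> tauto

lemma neighbor_sv1 {u : BVert n m}
    (h : (bondGraph C).Adj u (sv 1)) : u = sv 0 ∨ u = sv 2 := by
  rw [adj_iff] at h
  obtain ⟨-, h⟩ := h
  rcases u with ⟨i', b'⟩ | i' | j' | p' <;>
    simp [bondRel, sv] at h ⊢ <;> tauto

lemma neighbor_sv0 {u : BVert n m}
    (h : (bondGraph C).Adj u (sv 0)) : u = sv 1 ∨ ∃ j, u = cv j := by
  rw [adj_iff] at h
  obtain ⟨-, h⟩ := h
  rcases u with ⟨i', b'⟩ | i' | j' | p' <;>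
    simp [bondRel, sv, cv] at h ⊢ <;> tauto

lemma neighbor_sv2 {u : BVert n m}
    (h : (bondGraph C).Adj u (sv 2)) : u = sv 1 ∨ ∃ j, u = cv j := by
  rw [adj_iff] at h
  obtain ⟨-, h⟩ := h
  rcases u with ⟨i', b'⟩ | i' | j' | p' <;>
    simp [bondRel, sv, cv] at h ⊢ <;> tauto

lemma neighbor_cv {u : BVert n m} {j : Fin m}
    (h : (bondGraph C).Adj u (cv j)) :
    (∃ i b, u = litv i b ∧ ∃ k, C j k = (i, b)) ∨ u = sv 0 ∨ u = sv 2 := by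
  rw [adj_iff] at h
  obtain ⟨-, h⟩ := h
  rcases u with ⟨i', b'⟩ | i' | j' | p'
  · simp only [cv, bondRel, or_false] at h
    exact Or.inl ⟨i', b', rfl, h⟩
  · simp [bondRel, cv] at h
  · simp [bondRel, cv] at h
  · simp only [cv, sv, bondRel, or_false] at h
    right
    rcases h with h | h <;> simp [sv, h]

/-- Projection used to prove injectivity of the selector. -/
def bproj : BVert n m → Option (Fin n)
  | Sum.inl (i, _) => some i
  | Sum.inr (Sum.inl i) => some i
  | _ => none

lemma selector {D : Finset (BVert n m)} (hD : IsDomSet (bondGraph C) D) :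
    ∃ (w : Fin n → BVert n m) (ws : BVert n m),
      (∀ i, w i ∈ D) ∧ (∀ i, w i = vv i ∨ ∃ b, w i = litv i b) ∧
      ws ∈ D ∧ (∃ p, ws = sv p) ∧
      Function.Injective (Sum.elim w fun _ : Unit => ws) := by
  have hv : ∀ i : Fin n, ∃ w, w ∈ D ∧ (w = vv i ∨ ∃ b, w = litv (m := m) i b) := by
    intro i
    by_cases h : vv (m := m) i ∈ D
    · exact ⟨_, h, Or.inl rfl⟩
    · obtain ⟨u, hu, hadj⟩ := hD _ h
      exact ⟨u, hu, Or.inr (neighbor_vv hadj)⟩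
  choose w hwD hwT using hv
  have hs : ∃ ws, ws ∈ D ∧ ∃ p, ws = sv (n := n) (m := m) p := by
    by_cases h : sv (n := n) (m := m) 1 ∈ D
    · exact ⟨_, h, 1, rfl⟩
    · obtain ⟨u, hu, hadj⟩ := hD _ h
      rcases neighbor_sv1 hadj with h' | h' <;> exact ⟨u, hu, _, h'⟩
  obtain ⟨ws, hwsD, p, hwsp⟩ := hs
  refine ⟨w, ws, hwD, hwT, hwsD, ⟨p, hwsp⟩, ?_⟩
  have hproj_w : ∀ i, bproj (w i) = some i := by
    intro i
    rcases hwT i with h | ⟨b, h⟩ <;> rw [h] <;> rfl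
  have hproj_s : bproj ws = none := by rw [hwsp]; rfl
  intro a b hab
  have h := congrArg bproj hab
  rcases a with a | a <;> rcases b with b | b <;>
    simp [hproj_w, hproj_s] at h ⊢
  exact h

lemma dom_lb {D : Finset (BVert n m)} (hD : IsDomSet (bondGraph C) D) :
    n + 1 ≤ D.card := by
  obtain ⟨w, ws, hwD, -, hwsD, -, hinj⟩ := selector hD
  calc n + 1 = (Finset.univ : Finset (Fin n ⊕ Unit)).card := by simp
    _ ≤ D.card := by
        apply Finset.card_le_card_of_injOn (Sum.elim w fun _ : Unit => ws)
        · rintro (a | a) - <;> simp [hwD, hwsD]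
        · exact hinj.injOn

lemma sat_of_dom {D : Finset (BVert n m)} (hD : IsDomSet (bondGraph C) D)
    (hcard : D.card = n + 1) : Satisfiable C := by
  obtain ⟨w, ws, hwD, hwT, hwsD, ⟨p, hwsp⟩, hinj⟩ := selector hD
  -- D is exactly the selected vertices
  have himg : Finset.univ.image (Sum.elim w fun _ : Unit => ws) ⊆ D := by
    intro x hx
    simp only [Finset.mem_image] at hx
    obtain ⟨a, -, rfl⟩ := hx
    rcases a with a | a <;> simp [hwD, hwsD]
  have hDeq : D = Finset.univ.image (Sum.elim w fun _ : Unit => ws) := by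
    refine (Finset.eq_of_subset_of_card_le himg ?_).symm
    rw [hcard, Finset.card_image_of_injective _ hinj]
    simp
  have hmem : ∀ x ∈ D, (∃ i, x = w i) ∨ x = ws := by
    intro x hx
    rw [hDeq, Finset.mem_image] at hx
    obtain ⟨a, -, rfl⟩ := hx
    rcases a with a | a
    · exact Or.inl ⟨a, rfl⟩
    · exact Or.inr rfl
  have hshape : ∀ x ∈ D, (∃ i b, x = litv i b) ∨ (∃ i, x = vv i) ∨ x = sv p := by
    intro x hx
    rcases hmem x hx with ⟨i, hi⟩ | h
    · rcases hwT i with h' | ⟨b, h'⟩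
      · exact Or.inr (Or.inl ⟨i, hi.trans h'⟩)
      · exact Or.inl ⟨i, b, hi.trans h'⟩
    · exact Or.inr (Or.inr (h.trans hwsp))
  have hcvD : ∀ j : Fin m, cv j ∉ D := by
    intro j hj
    rcases hshape _ hj with ⟨i, b, h⟩ | ⟨i, h⟩ | h <;> simp [cv, litv, vv, sv] at h
  have hsvD : ∀ q : Fin 3, sv (n := n) (m := m) q ∈ D → q = p := by
    intro q hq
    rcases hshape _ hq with ⟨i, b, h⟩ | ⟨i, h⟩ | h <;> simp [cv, litv, vv, sv] at h
    exact h
  -- the s-vertex in D is s₂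
  have hp : p = 1 := by
    by_contra hp
    have h1 : sv (n := n) (m := m) 1 ∉ D := fun h => hp (hsvD 1 h).symm
    fin_cases p
    · -- p = 0 : s₃ is undominated
      obtain ⟨u, hu, hadj⟩ := hD (sv 2) (fun h => absurd (hsvD 2 h) (by decide))
      rcases neighbor_sv2 hadj with h' | ⟨j, h'⟩
      · exact h1 (h' ▸ hu)
      · exact hcvD j (h' ▸ hu)
    · exact hp rfl
    · -- p = 2 : s₁ is undominated
      obtain ⟨u, hu, hadj⟩ := hD (sv 0) (fun h => absurd (hsvD 0 h) (by decide))
      rcases neighbor_sv0 hadj with h' | ⟨j, h'⟩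
      · exact h1 (h' ▸ hu)
      · exact hcvD j (h' ▸ hu)
  -- each clause is dominated by a literal vertex of D
  have hc : ∀ j : Fin m, ∃ i b, litv (m := m) i b ∈ D ∧ ∃ k, C j k = (i, b) := by
    intro j
    obtain ⟨u, hu, hadj⟩ := hD _ (hcvD j)
    rcases neighbor_cv hadj with ⟨i, b, rfl, hk⟩ | h' | h'
    · exact ⟨i, b, hu, hk⟩
    · subst h'; have := hsvD 0 hu; rw [hp] at this; exact absurd this (by decide)
    · subst h'; have := hsvD 2 hu; rw [hp] at this; exact absurd this (by decide)
  -- a literal vertex of D is the selected vertex of its triangle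
  have hlit : ∀ (i : Fin n) (b : Bool), litv (m := m) i b ∈ D → w i = litv i b := by
    intro i b hb
    rcases hmem _ hb with ⟨i', h1⟩ | h1
    · rcases hwT i' with h2 | ⟨b', h2⟩
      · rw [h2] at h1; simp [litv, vv] at h1
      · rw [h2] at h1
        simp only [litv, Sum.inl.injEq, Prod.mk.injEq] at h1
        obtain ⟨rfl, rfl⟩ := h1
        exact h2
    · rw [hwsp] at h1; simp [litv, sv] at h1
  -- the satisfying assignment
  refine ⟨fun i => (w i).elim (fun l => l.2) (fun _ => true), fun j => ?_⟩
  obtain ⟨i, b, hbD, k, hk⟩ := hc j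
  refine ⟨k, ?_⟩
  rw [hk]
  have := hlit i b hbD
  simp [this, litv]

lemma dom_of_sat {t : Fin n → Bool} (ht : ∀ j : Fin m, ∃ k, t (C j k).1 = (C j k).2) :
    IsDomSet (bondGraph C)
      ((Finset.univ.image fun i => litv (m := m) i (t i)) ∪ {sv 1}) := by
  intro v hv
  simp only [Finset.mem_union, Finset.mem_image, Finset.mem_singleton, not_or,
    not_exists] at hv
  obtain ⟨hv1, hv2⟩ := hv
  rcases v with ⟨i, b⟩ | i | j | q
  · -- literal vertex
    have hb : t i ≠ b := by
      intro h
      exact hv1 i ⟨by simp, by rw [h]; rfl⟩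
    refine ⟨litv i (t i), by simp, ?_⟩
    rw [adj_iff]
    refine ⟨by simp [litv, hb], Or.inl ?_⟩
    simp [litv, bondRel, hb]
  · -- apex vertex
    refine ⟨litv i (t i), by simp, ?_⟩
    rw [adj_iff]
    exact ⟨by simp [litv, vv], Or.inl (by simp only [litv, vv, bondRel])⟩
  · -- clause vertex
    obtain ⟨k, hk⟩ := ht j
    refine ⟨litv (C j k).1 (C j k).2, ?_, ?_⟩
    · simp only [Finset.mem_union, Finset.mem_image]
      exact Or.inl ⟨(C j k).1, by simp, by rw [hk]⟩
    · rw [adj_iff]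
      refine ⟨by simp [litv, cv], Or.inl ?_⟩
      simp only [litv, cv, bondRel]
      exact ⟨k, rfl⟩
  · -- path vertex
    have hq : q ≠ 1 := fun h => hv2 (by rw [h]; rfl)
    refine ⟨sv 1, by simp, ?_⟩
    rw [adj_iff]
    refine ⟨by simp [sv, Ne.symm hq], ?_⟩
    fin_cases q
    · exact Or.inr (Or.inl (by simp only [sv, bondRel]; tauto))
    · exact absurd rfl hq
    · exact Or.inl (Or.inr (by simp only [sv, bondRel]; tauto))

lemma card_sat {t : Fin n → Bool} :
    ((Finset.univ.image fun i => litv (m := m) i (t i)) ∪ {sv 1}).card = n + 1 := by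
  rw [Finset.card_union_of_disjoint (by simp [litv, sv]),
    Finset.card_image_of_injective _ (fun a b h => by simp only [litv, Sum.inl.injEq, Prod.mk.injEq] at h; exact h.1)]
  simp

end

/-- In the bondage construction, `γ(G) = n + 1` iff the 3-SAT instance is satisfiable. -/
theorem bondGraph_domNum_eq_iff_satisfiable {n m : ℕ} (C : Fin m → Fin 3 → Lit n) :
    domNum (bondGraph C) = n + 1 ↔ Satisfiable C := by
  constructor
  · intro h
    have hne : {k | ∃ D : Finset (BVert n m), IsDomSet (bondGraph C) D ∧ D.card = k}.Nonempty :=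
      ⟨(Finset.univ : Finset (BVert n m)).card, Finset.univ,
        fun v hv => absurd (Finset.mem_univ v) hv, rfl⟩
    have := Nat.sInf_mem hne
    rw [show sInf {k | ∃ D : Finset (BVert n m), IsDomSet (bondGraph C) D ∧ D.card = k}
        = n + 1 from h] at this
    obtain ⟨D, hD, hcard⟩ := this
    exact sat_of_dom hD hcard
  · rintro ⟨t, ht⟩
    refine le_antisymm (Nat.sInf_le ⟨_, dom_of_sat ht, card_sat⟩) ?_
    refine le_csInf ⟨_, _, dom_of_sat ht, card_sat⟩ ?_
    rintro k ⟨D, hD, rfl⟩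
    exact dom_lb hD
end

section
/- Let G be the 3-SAT bondage construction (triangles {u_i, ū_i, v_i}, clause vertices c_j adjacent to their three literals, path s_1 s_2 s_3 with s_1, s_3 joined to all c_j). Then for every edge e of G, γ(G − e) ≤ n + 2. -/
/-!
Whatever edge `e` is removed, each triangle `{uᵢ, ūᵢ, vᵢ}` still has a vertex not on `e`,
and that vertex dominates its whole triangle in `G − e`. Every clause vertex and `s₂` have
the two neighbours `s₁, s₃`, and `e` can cut at most one of those two edges. So one vertex
per triangle together with `s₁, s₃` dominates `G − e`.
-/

namespace SimpleGraph

variable {V : Type*} (G : SimpleGraph V)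

lemma deleteEdges_singleton_adj_of_notMem {e : Sym2 V} {u v : V} (h : G.Adj u v) (hu : u ∉ e) :
    (G.deleteEdges {e}).Adj u v :=
  (G.deleteEdges_adj).2 ⟨h, fun he => hu (Set.mem_singleton_iff.1 he ▸ Sym2.mem_mk_left u v)⟩

lemma deleteEdges_singleton_adj_or_adj {e : Sym2 V} {u₁ u₂ v : V} (hne : u₁ ≠ u₂)
    (h₁ : G.Adj u₁ v) (h₂ : G.Adj u₂ v) :
    (G.deleteEdges {e}).Adj u₁ v ∨ (G.deleteEdges {e}).Adj u₂ v := by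
  by_contra! h
  have he₁ : s(u₁, v) = e := by simpa [h₁] using h.1
  have he₂ : s(u₂, v) = e := by simpa [h₂] using h.2
  exact hne (Sym2.congr_left.1 (he₁.trans he₂.symm))

lemma exists_notMem_sym2_of_ne {a b c : V} (hab : a ≠ b) (hac : a ≠ c) (hbc : b ≠ c)
    (e : Sym2 V) : ∃ w ∈ ({a, b, c} : Set V), w ∉ e := by
  by_cases ha : a ∈ e
  · by_cases hb : b ∈ e
    · refine ⟨c, by simp, ?_⟩
      rw [(Sym2.mem_and_mem_iff hab).1 ⟨ha, hb⟩, Sym2.mem_iff]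
      exact not_or_intro hac.symm hbc.symm
    · exact ⟨b, by simp, hb⟩
  · exact ⟨a, by simp, ha⟩

lemma exists_deleteEdges_singleton_adj_of_triangle {a b c : V} (hab : G.Adj a b)
    (hac : G.Adj a c) (hbc : G.Adj b c) (e : Sym2 V) :
    ∃ w ∈ ({a, b, c} : Set V),
      ∀ x ∈ ({a, b, c} : Set V), x ≠ w → (G.deleteEdges {e}).Adj w x := by
  obtain ⟨w, hw, hwe⟩ := exists_notMem_sym2_of_ne hab.ne hac.ne hbc.ne e
  refine ⟨w, hw, fun x hx hxw => G.deleteEdges_singleton_adj_of_notMem ?_ hwe⟩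
  simp only [Set.mem_insert_iff, Set.mem_singleton_iff] at hw hx
  rcases hw with rfl | rfl | rfl <;> rcases hx with rfl | rfl | rfl <;>
    first | exact absurd rfl hxw | assumption | exact G.adj_symm ‹_›

end SimpleGraph

lemma domNum_le_card {V : Type*} {G : SimpleGraph V} {D : Finset V} (hD : IsDomSet G D) :
    domNum G ≤ D.card :=
  Nat.sInf_le ⟨D, hD, rfl⟩

section BondGraph

variable {n m : ℕ} (C : Fin m → Fin 3 → Lit n)

lemma bondGraph_adj_litv_litv (i : Fin n) : (bondGraph C).Adj (litv i true) (litv i false) := by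
  simp [bondGraph, bondRel, litv]

lemma bondGraph_adj_litv_vv (i : Fin n) (b : Bool) : (bondGraph C).Adj (litv i b) (vv i) := by
  simp [bondGraph, bondRel, litv, vv]

lemma bondGraph_adj_sv_cv {k : Fin 3} (hk : k = 0 ∨ k = 2) (j : Fin m) :
    (bondGraph C).Adj (sv k) (cv j) := by
  simp [bondGraph, bondRel, sv, cv, hk]

lemma bondGraph_adj_sv_sv_one {k : Fin 3} (hk : k = 0 ∨ k = 2) :
    (bondGraph C).Adj (sv k) (sv 1 : BVert n m) := by
  rcases hk with rfl | rfl <;> simp [bondGraph, bondRel, sv]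

lemma bondGraph_exists_isDomSet_deleteEdge (e : Sym2 (BVert n m)) :
    ∃ D, IsDomSet ((bondGraph C).deleteEdges {e}) D ∧ D.card ≤ n + 2 := by
  choose t _ hdom using fun i => (bondGraph C).exists_deleteEdges_singleton_adj_of_triangle
    (bondGraph_adj_litv_litv C i) (bondGraph_adj_litv_vv C i true)
    (bondGraph_adj_litv_vv C i false) e
  set D := Finset.univ.image t ∪ {sv 0, sv 2}
  have htD : ∀ i, t i ∈ D := fun i =>
    Finset.mem_union_left _ (Finset.mem_image_of_mem t (Finset.mem_univ i))
  have htriangle : ∀ i, ∀ x ∈ ({litv i true, litv i false, vv i} : Set (BVert n m)),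
      x ∉ D → ∃ u ∈ D, ((bondGraph C).deleteEdges {e}).Adj u x := fun i x hx hxD =>
    ⟨t i, htD i, hdom i x hx fun h => hxD (h ▸ htD i)⟩
  have hpath : ∀ x, (bondGraph C).Adj (sv 0) x → (bondGraph C).Adj (sv 2) x →
      ∃ u ∈ D, ((bondGraph C).deleteEdges {e}).Adj u x := fun x h₀ h₂ =>
    ((bondGraph C).deleteEdges_singleton_adj_or_adj (by simp [sv]) h₀ h₂).elim
      (fun h => ⟨sv 0, by simp [D], h⟩) (fun h => ⟨sv 2, by simp [D], h⟩)
  refine ⟨D, ?_, ?_⟩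
  · rintro (⟨i, b⟩ | i | j | k) hv
    · exact htriangle i _ (by cases b <;> simp [litv]) hv
    · exact htriangle i _ (by simp [vv]) hv
    · exact hpath _ (bondGraph_adj_sv_cv C (.inl rfl) j) (bondGraph_adj_sv_cv C (.inr rfl) j)
    · fin_cases k
      · exact absurd (by simp [D, sv]) hv
      · exact hpath _ (bondGraph_adj_sv_sv_one C (.inl rfl))
          (bondGraph_adj_sv_sv_one C (.inr rfl))
      · exact absurd (by simp [D, sv]) hv
  · calc D.card ≤ (Finset.univ.image t).card + ({sv 0, sv 2} : Finset (BVert n m)).card :=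
          Finset.card_union_le _ _
      _ ≤ n + 2 := by
          gcongr
          · exact Finset.card_image_le.trans (by simp)
          · exact Finset.card_le_two

end BondGraph

/-- In the bondage construction, `γ(G − e) ≤ n + 2` for every edge `e` of `G`. -/
theorem bondGraph_domNum_deleteEdge_le {n m : ℕ} (C : Fin m → Fin 3 → Lit n) :
    ∀ e ∈ (bondGraph C).edgeSet,
      domNum ((bondGraph C).deleteEdges {e}) ≤ n + 2 := by
  intro e _
  obtain ⟨D, hD, hcard⟩ := bondGraph_exists_isDomSet_deleteEdge C e
  exact (domNum_le_card hD).trans hcard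
end

section
/- Let G be the 3-SAT bondage construction (triangles {u_i, ū_i, v_i}, clause vertices c_j adjacent to their three literals, path s_1 s_2 s_3 with s_1, s_3 joined to all c_j). Then γ(G) = n + 1 if and only if b(G) = 1, where b(G) is the bondage number. -/
/-- The bondage number of `G`: the minimum number of edges whose removal from `G`
results in a graph with strictly larger domination number. -/
noncomputable def bondage {V : Type*} (G : SimpleGraph V) : ℕ :=
  sInf {k | ∃ F : Finset (Sym2 V), ↑F ⊆ G.edgeSet ∧ F.card = k ∧
    domNum G < domNum (G.deleteEdges ↑F)}

open Finset

namespace BondProof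

variable {n m : ℕ} {C : Fin m → Fin 3 → Lit n}

/-- classify a vertex by which "triangle block" it lies in (none = s/c vertices) -/
def bkey : BVert n m → Option (Fin n)
  | Sum.inl (i, _) => some i
  | Sum.inr (Sum.inl i) => some i
  | _ => none

lemma adj_to_vv {u : BVert n m} {i : Fin n} (h : (bondGraph C).Adj u (vv i)) :
    u = litv i true ∨ u = litv i false := by
  obtain ⟨hne, h | h⟩ := h <;>
    rcases u with ⟨i', b'⟩ | i' | j | p <;>
    simp_all [bondRel, vv, litv]

lemma adj_to_sv1 {u : BVert n m} (h : (bondGraph C).Adj u (sv 1)) :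
    u = sv 0 ∨ u = sv 2 := by
  obtain ⟨hne, h | h⟩ := h <;>
    rcases u with ⟨i', b'⟩ | i' | j | p <;>
    simp_all [bondRel, sv]

lemma adj_to_sv0 {u : BVert n m} (h : (bondGraph C).Adj u (sv 0)) :
    u = sv 1 ∨ ∃ j, u = cv j := by
  obtain ⟨hne, h | h⟩ := h <;>
    rcases u with ⟨i', b'⟩ | i' | j | p <;>
    simp_all [bondRel, sv, cv]

lemma domset_structure (G' : SimpleGraph (BVert n m))
    (hle : G' ≤ bondGraph C) (D : Finset (BVert n m)) (hD : IsDomSet G' D) :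
    ∃ f : Option (Fin n) → BVert n m,
      (∀ o, f o ∈ D) ∧ (∀ o, bkey (f o) = o) ∧
      (f none = sv 1 ∨ G'.Adj (f none) (sv 1)) ∧
      n + 1 ≤ D.card ∧
      (D.card ≤ n + 1 → ∀ x ∈ D, ∃ o, f o = x) := by
  classical
  have mk : ∀ o : Option (Fin n), ∃ x, x ∈ D ∧ bkey x = o ∧
      (o = none → (x = sv 1 ∨ G'.Adj x (sv 1))) := by
    intro o
    match o with
    | none =>
      by_cases h : sv 1 ∈ D
      · exact ⟨sv 1, h, rfl, fun _ => Or.inl rfl⟩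
      · obtain ⟨u, hu, hadj⟩ := hD _ h
        refine ⟨u, hu, ?_, fun _ => Or.inr hadj⟩
        rcases adj_to_sv1 (hle hadj) with rfl | rfl <;> rfl
    | some i =>
      by_cases h : vv i ∈ D
      · exact ⟨vv i, h, rfl, by simp⟩
      · obtain ⟨u, hu, hadj⟩ := hD _ h
        refine ⟨u, hu, ?_, by simp⟩
        rcases adj_to_vv (hle hadj) with rfl | rfl <;> rfl
  choose f hfD hfk hfs using mk
  have hinj : Function.Injective f := fun a b h => by rw [← hfk a, ← hfk b, h]
  have hcard : n + 1 ≤ D.card := by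
    have := Finset.card_le_card_of_injOn (s := (univ : Finset (Option (Fin n)))) f (fun o _ => hfD o) hinj.injOn
    simpa using this
  refine ⟨f, hfD, hfk, hfs none rfl, hcard, ?_⟩
  intro hle' x hx
  have himg : (univ.image f) = D := by
    apply Finset.eq_of_subset_of_card_le
    · intro y hy
      obtain ⟨o, -, rfl⟩ := Finset.mem_image.1 hy
      exact hfD o
    · rw [Finset.card_image_of_injective _ hinj]
      simpa using hle'
  rw [← himg] at hx
  obtain ⟨o, -, rfl⟩ := Finset.mem_image.1 hx
  exact ⟨o, rfl⟩

lemma lb1 (D : Finset (BVert n m)) (hD : IsDomSet (bondGraph C) D) : n + 1 ≤ D.card :=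
  (domset_structure (bondGraph C) le_rfl D hD).choose_spec.2.2.2.1

lemma lb2 (D : Finset (BVert n m))
    (hD : IsDomSet ((bondGraph C).deleteEdges {s(sv 0, sv 1)}) D) : n + 2 ≤ D.card := by
  by_contra hlt
  push_neg at hlt
  have hle1 : D.card ≤ n + 1 := by omega
  obtain ⟨f, hfD, hfk, hfs, hcard, hall⟩ :=
    domset_structure ((bondGraph C).deleteEdges {s(sv 0, sv 1)})
      (SimpleGraph.deleteEdges_le _) D hD
  have hfnone : f none = sv 1 ∨ f none = sv 2 := by
    rcases hfs with h | h
    · exact Or.inl h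
    · rw [SimpleGraph.deleteEdges_adj] at h
      obtain ⟨hG, hne⟩ := h
      rcases adj_to_sv1 hG with h' | h'
      · exact absurd (by rw [h']; exact rfl : s(f none, sv (1:Fin 3)) ∈ ({s(sv 0, sv 1)} : Set (Sym2 (BVert n m)))) hne
      · exact Or.inr h'
  have hs0 : sv 0 ∉ D := by
    intro h
    obtain ⟨o, ho⟩ := hall hle1 _ h
    have ho' : o = none := by rw [← hfk o, ho]; rfl
    subst ho'
    rw [ho] at hfnone
    simp [sv, Fin.ext_iff] at hfnone
  obtain ⟨u, hu, hadj⟩ := hD _ hs0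
  rw [SimpleGraph.deleteEdges_adj] at hadj
  obtain ⟨hG, hne⟩ := hadj
  rcases adj_to_sv0 hG with rfl | ⟨j, rfl⟩
  · exact hne (Sym2.eq_swap)
  · obtain ⟨o, ho⟩ := hall hle1 _ hu
    have ho' : o = none := by rw [← hfk o, ho]; rfl
    subst ho'
    rw [ho] at hfnone
    simp [sv, cv] at hfnone

def repl (e : Sym2 (BVert n m)) (i : Fin n) : BVert n m :=
  if e = s(vv i, litv i true) then litv i false
  else if e = s(vv i, litv i false) then litv i true
  else vv i

def D2 (e : Sym2 (BVert n m)) : Finset (BVert n m) :=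
  (univ.image (repl e)) ∪ {sv 0, sv 2}

lemma D2_card (e : Sym2 (BVert n m)) : (D2 (n := n) (m := m) e).card ≤ n + 2 := by
  classical
  calc (D2 (n := n) (m := m) e).card
      ≤ (univ.image (repl e)).card + ({sv 0, sv 2} : Finset (BVert n m)).card :=
        Finset.card_union_le _ _
    _ ≤ n + 2 := by
        have h1 : (univ.image (repl (n := n) (m := m) e)).card ≤ n := by
          simpa using Finset.card_image_le (s := (univ : Finset (Fin n))) (f := repl e)
        have h2 : ({sv 0, sv 2} : Finset (BVert n m)).card ≤ 2 :=
          le_trans (Finset.card_insert_le _ _) (by simp)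
        omega

lemma D2_dom (e : Sym2 (BVert n m)) :
    IsDomSet ((bondGraph C).deleteEdges {e}) (D2 e) := by
  classical
  intro w hw
  have hmem : ∀ i : Fin n, repl e i ∈ D2 (n := n) (m := m) e := fun i =>
    Finset.mem_union_left _ (Finset.mem_image_of_mem _ (mem_univ i))
  have hs0 : sv 0 ∈ D2 (n := n) (m := m) e := Finset.mem_union_right _ (by simp)
  have hs2 : sv 2 ∈ D2 (n := n) (m := m) e := Finset.mem_union_right _ (by simp)
  rcases w with ⟨i, b⟩ | i | j | p
  · -- w = litv i b
    by_cases h1 : e = s(vv i, litv i true)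
    · have hrepl : repl (n := n) (m := m) e i = litv i false := by simp only [repl]; rw [if_pos h1]
      have hm := hmem i; rw [hrepl] at hm
      have hbt : b = true := by
        cases b
        · exact absurd hm hw
        · rfl
      subst hbt
      refine ⟨litv i false, hm, ?_⟩
      rw [SimpleGraph.deleteEdges_adj]
      refine ⟨⟨by simp [litv], Or.inl ⟨rfl, by simp⟩⟩, ?_⟩
      intro hc
      rw [Set.mem_singleton_iff, h1, Sym2.eq_iff] at hc
      simp [litv, vv] at hc
    · by_cases h2 : e = s(vv i, litv i false)
      · have hrepl : repl (n := n) (m := m) e i = litv i true := by simp only [repl]; rw [if_neg h1, if_pos h2]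
        have hm := hmem i; rw [hrepl] at hm
        have hbt : b = false := by
          cases b
          · rfl
          · exact absurd hm hw
        subst hbt
        refine ⟨litv i true, hm, ?_⟩
        rw [SimpleGraph.deleteEdges_adj]
        refine ⟨⟨by simp [litv], Or.inl ⟨rfl, by simp⟩⟩, ?_⟩
        intro hc
        rw [Set.mem_singleton_iff, h2, Sym2.eq_iff] at hc
        simp [litv, vv] at hc
      · have hrepl : repl (n := n) (m := m) e i = vv i := by simp only [repl]; rw [if_neg h1, if_neg h2]
        have hm := hmem i; rw [hrepl] at hm
        refine ⟨vv i, hm, ?_⟩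
        rw [SimpleGraph.deleteEdges_adj]
        refine ⟨⟨by simp [litv, vv], Or.inr (by exact rfl : bondRel C (litv i b) (vv i))⟩, ?_⟩
        intro hc
        rw [Set.mem_singleton_iff] at hc
        have hce : e = s(vv i, litv i b) := hc.symm
        cases b
        · exact h2 hce
        · exact h1 hce
  · -- w = vv i
    by_cases h1 : e = s(vv i, litv i true)
    · have hrepl : repl (n := n) (m := m) e i = litv i false := by simp only [repl]; rw [if_pos h1]
      have hm := hmem i; rw [hrepl] at hm
      refine ⟨litv i false, hm, ?_⟩
      rw [SimpleGraph.deleteEdges_adj]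
      refine ⟨⟨by simp [litv, vv], Or.inl rfl⟩, ?_⟩
      intro hc
      rw [Set.mem_singleton_iff, h1, Sym2.eq_iff] at hc
      simp [litv, vv] at hc
    · by_cases h2 : e = s(vv i, litv i false)
      · have hrepl : repl (n := n) (m := m) e i = litv i true := by simp only [repl]; rw [if_neg h1, if_pos h2]
        have hm := hmem i; rw [hrepl] at hm
        refine ⟨litv i true, hm, ?_⟩
        rw [SimpleGraph.deleteEdges_adj]
        refine ⟨⟨by simp [litv, vv], Or.inl rfl⟩, ?_⟩
        intro hc
        rw [Set.mem_singleton_iff, h2, Sym2.eq_iff] at hc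
        simp [litv, vv] at hc
      · have hrepl : repl (n := n) (m := m) e i = vv i := by simp only [repl]; rw [if_neg h1, if_neg h2]
        have hm := hmem i; rw [hrepl] at hm
        exact absurd hm hw
  · -- w = cv j
    by_cases h : e = s(sv 0, cv j)
    · refine ⟨sv 2, hs2, ?_⟩
      rw [SimpleGraph.deleteEdges_adj]
      refine ⟨⟨by simp [sv, cv], Or.inl (by simp [bondRel, sv, cv])⟩, ?_⟩
      intro hc
      rw [Set.mem_singleton_iff, h, Sym2.eq_iff] at hc
      simp [sv, cv, Fin.ext_iff] at hc
    · refine ⟨sv 0, hs0, ?_⟩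
      rw [SimpleGraph.deleteEdges_adj]
      refine ⟨⟨by simp [sv, cv], Or.inl (by simp [bondRel, sv, cv])⟩, ?_⟩
      intro hc
      rw [Set.mem_singleton_iff] at hc
      exact h hc.symm
  · -- w = sv p
    fin_cases p
    · exact absurd hs0 hw
    · by_cases h : e = s(sv 0, sv 1)
      · refine ⟨sv 2, hs2, ?_⟩
        rw [SimpleGraph.deleteEdges_adj]
        refine ⟨⟨by simp [sv, Fin.ext_iff], Or.inr (by simp [bondRel, sv])⟩, ?_⟩
        intro hc
        rw [Set.mem_singleton_iff, h, Sym2.eq_iff] at hc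
        simp [sv, Fin.ext_iff] at hc
      · refine ⟨sv 0, hs0, ?_⟩
        rw [SimpleGraph.deleteEdges_adj]
        refine ⟨⟨by simp [sv, Fin.ext_iff], Or.inl (by simp [bondRel, sv])⟩, ?_⟩
        intro hc
        rw [Set.mem_singleton_iff] at hc
        exact h hc.symm
    · exact absurd hs2 hw

lemma univ_dom {V : Type*} [Fintype V] (G : SimpleGraph V) : IsDomSet G univ :=
  fun v hv => absurd (mem_univ v) hv

lemma domNum_le {V : Type*} {G : SimpleGraph V} {D : Finset V} (h : IsDomSet G D) :
    domNum G ≤ D.card := Nat.sInf_le ⟨D, h, rfl⟩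

lemma le_domNum {V : Type*} [Fintype V] {G : SimpleGraph V} {k : ℕ}
    (h : ∀ D : Finset V, IsDomSet G D → k ≤ D.card) : k ≤ domNum G := by
  refine le_csInf ⟨(univ : Finset V).card, univ, univ_dom G, rfl⟩ ?_
  rintro b ⟨D, hD, rfl⟩
  exact h D hD

lemma domNum_mono {V : Type*} [Fintype V] {G G' : SimpleGraph V} (h : G' ≤ G) :
    domNum G ≤ domNum G' := by
  have hne : {k | ∃ D : Finset V, IsDomSet G' D ∧ D.card = k}.Nonempty :=
    ⟨_, univ, univ_dom G', rfl⟩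
  obtain ⟨D, hD, hcard⟩ := Nat.sInf_mem hne
  calc domNum G ≤ D.card := domNum_le (fun v hv => (hD v hv).imp fun u hu => ⟨hu.1, h hu.2⟩)
    _ = domNum G' := hcard

lemma edge01 : s(sv 0, sv 1) ∈ (bondGraph C).edgeSet := by
  rw [SimpleGraph.mem_edgeSet]
  exact ⟨by simp [sv, Fin.ext_iff], Or.inl (by simp [bondRel, sv])⟩

theorem main : domNum (bondGraph C) = n + 1 ↔ bondage (bondGraph C) = 1 := by
  classical
  have hub2 : ∀ e : Sym2 (BVert n m), domNum ((bondGraph C).deleteEdges {e}) ≤ n + 2 :=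
    fun e => le_trans (domNum_le (D2_dom e)) (D2_card e)
  set S : Set ℕ := {k | ∃ F : Finset (Sym2 (BVert n m)), ↑F ⊆ (bondGraph C).edgeSet ∧
      F.card = k ∧ domNum (bondGraph C) < domNum ((bondGraph C).deleteEdges ↑F)} with hS
  have hbS : bondage (bondGraph C) = sInf S := rfl
  have h0 : (0 : ℕ) ∉ S := by
    rintro ⟨F, -, hc, hlt⟩
    rw [Finset.card_eq_zero] at hc
    subst hc
    simp only [Finset.coe_empty, SimpleGraph.deleteEdges_empty] at hlt
    exact lt_irrefl _ hlt
  constructor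
  · intro hγ
    have h1 : (1 : ℕ) ∈ S := by
      refine ⟨{s(sv 0, sv 1)}, ?_, Finset.card_singleton _, ?_⟩
      · intro x hx
        simp only [Finset.coe_singleton, Set.mem_singleton_iff] at hx
        subst hx
        exact edge01
      · rw [hγ, Finset.coe_singleton]
        have := le_domNum (G := (bondGraph C).deleteEdges {s(sv 0, sv 1)}) (k := n + 2) lb2
        omega
    rw [hbS]
    have hle := Nat.sInf_le h1
    have hmem := Nat.sInf_mem ⟨1, h1⟩
    have hz : sInf S ≠ 0 := fun h => h0 (h ▸ hmem)
    omega
  · intro hb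
    by_contra hne
    have hγ1 : n + 1 ≤ domNum (bondGraph C) := le_domNum lb1
    have hγ2 : domNum (bondGraph C) ≤ n + 2 :=
      le_trans (domNum_mono (SimpleGraph.deleteEdges_le _)) (hub2 s(sv 0, sv 1))
    have hγ : domNum (bondGraph C) = n + 2 := by omega
    have h1 : (1 : ℕ) ∉ S := by
      rintro ⟨F, hFe, hc, hlt⟩
      obtain ⟨e, rfl⟩ := Finset.card_eq_one.1 hc
      rw [Finset.coe_singleton, hγ] at hlt
      have := hub2 e
      omega
    rw [hbS] at hb
    rcases Set.eq_empty_or_nonempty S with h | h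
    · rw [h, Nat.sInf_empty] at hb
      exact absurd hb.symm one_ne_zero
    · exact h1 (hb ▸ Nat.sInf_mem h)

end BondProof

/-- In the bondage construction, `γ(G) = n + 1` iff `b(G) = 1`. -/
theorem bondGraph_domNum_iff_bondage_one {n m : ℕ} (C : Fin m → Fin 3 → Lit n) :
    domNum (bondGraph C) = n + 1 ↔ bondage (bondGraph C) = 1 := BondProof.main
end

section
/- If a 3-SAT instance with n variables is satisfiable, then in the 3-SAT bondage construction (triangles {u_i, ū_i, v_i}, clause vertices c_j adjacent to their three literals, path s_1 s_2 s_3 with s_1, s_3 joined to all c_j), the set consisting of s_2 together with, for each variable u_i, the literal vertex made true by a satisfying assignment, is a dominating set of size n + 1. -/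
/-- If `t` is a satisfying assignment of the 3-SAT instance, then in the bondage
construction the set consisting of `s₂` together with the true literal vertex of
each variable is a dominating set of size `n + 1`. -/
theorem bondGraph_satisfying_domSet {n m : ℕ} (C : Fin m → Fin 3 → Lit n)
    (t : Fin n → Bool) (ht : ∀ j : Fin m, ∃ k : Fin 3, t (C j k).1 = (C j k).2) :
    IsDomSet (bondGraph C)
        (insert (sv 1) (Finset.image (fun i => litv i (t i)) Finset.univ)) ∧
      (insert (sv 1) (Finset.image (fun i => litv i (t i)) Finset.univ) :
        Finset (BVert n m)).card = n + 1 := by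

  constructor
  · intro v hv
    match v with
    | Sum.inl (i, b) =>
        refine ⟨litv i (t i), by simp, ?_⟩
        have hb : b ≠ t i := by
          intro h; subst h
          exact hv (Finset.mem_insert_of_mem (Finset.mem_image.2 ⟨i, Finset.mem_univ i, rfl⟩))
        refine ⟨?_, Or.inl ⟨rfl, fun h => hb h.symm⟩⟩
        simp [litv]; intro h; exact hb h.symm
    | Sum.inr (Sum.inl i) =>
        refine ⟨litv i (t i), by simp, ⟨by simp [litv, vv], Or.inl rfl⟩⟩
    | Sum.inr (Sum.inr (Sum.inl j)) =>
        obtain ⟨k, hk⟩ := ht j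
        refine ⟨litv (C j k).1 (t (C j k).1), by simp, ⟨by simp [litv, cv], Or.inl ⟨k, ?_⟩⟩⟩
        simp [litv, hk]
    | Sum.inr (Sum.inr (Sum.inr p)) =>
        refine ⟨sv 1, Finset.mem_insert_self _ _, ?_⟩
        have hp : p ≠ 1 := by
          intro h; subst h; exact hv (Finset.mem_insert_self _ _)
        fin_cases p
        · exact ⟨by simp [sv], Or.inr (Or.inl ⟨rfl, rfl⟩)⟩
        · exact absurd rfl hp
        · exact ⟨by simp [sv], Or.inl (Or.inr ⟨rfl, rfl⟩)⟩
  · rw [Finset.card_insert_of_notMem (by simp [sv, litv]),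
      Finset.card_image_of_injective _ (fun a b h => by simp [litv, Prod.ext_iff] at h; exact h.1),
      Finset.card_univ, Fintype.card_fin]
end
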